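/- Let p be an odd prime, ξ = exp(2πi/p), and let m be an integer coprime to p. For n with 1 ≤ n ≤ (p-1)/2 and any integer g, the sum Σ_{k=n}^{(p-1)/2} (ξ^{-mk} - ξ^{mk}) ξ^{gk²} C(k+n-1, k-n) is divisible by (ξ - 1)^{(p-1)/2 - n + 1} in Z[ξ]. -/

import Mathlib

/-!
Write every power of `ξ` as `ξ ^ e` with `0 ≤ e < p` and expand in powers of `π = ξ - 1`: the sum
becomes `∑ⱼ Tⱼ πʲ` with integer Taylor coefficients `Tⱼ`. As `π ^ (p - 1) ∣ p`, it suffices that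
`p ∣ Tⱼ` for `j ≤ (p - 1) / 2 - n`. Modulo `p`, `j! (2n - 1)! Tⱼ` is `∑_{k=n}^{(p-1)/2} h(k)` for
the even polynomial `h(x) = (Dⱼ(gx² - mx) - Dⱼ(gx² + mx)) D_{2n-1}(x + n - 1)`, `D` the falling
factorial. It has degree `< p - 1`, so its values sum to `0` over `𝔽_p`; it vanishes at
`0, …, n - 1`, and evenness folds the sum over `𝔽_p` onto `1, …, (p - 1) / 2`.
-/

open Polynomial Finset

open scoped Nat

theorem sub_one_pow_dvd_aeval_of_dvd_taylor_coeff {R : Type*} [CommRing R] {x : R} {N : ℕ}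
    {q : ℤ} (hq : (x - 1) ^ N ∣ (q : R)) (P : ℤ[X])
    (hP : ∀ j < N, q ∣ (taylor 1 P).coeff j) : (x - 1) ^ N ∣ aeval x P := by
  rw [show aeval x P = aeval (x - 1) (taylor 1 P) by simp [taylor_apply, aeval_comp],
    aeval_eq_sum_range]
  refine dvd_sum fun j _ => ?_
  rw [zsmul_eq_mul]
  rcases lt_or_ge j N with hj | hj
  · obtain ⟨u, hu⟩ := hP j hj
    rw [hu, Int.cast_mul, mul_assoc]
    exact hq.mul_right _
  · exact (pow_dvd_pow _ hj).mul_left _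

theorem sub_one_pow_dvd_sum_mul_pow_sub_pow {ι R : Type*} [CommRing R] {x : R} {N : ℕ} {q : ℤ}
    (hq : (x - 1) ^ N ∣ (q : R)) (s : Finset ι) (c : ι → ℤ) (a b : ι → ℕ)
    (hcoeff : ∀ j < N, q ∣ ∑ i ∈ s, c i * (((a i).choose j : ℤ) - (b i).choose j)) :
    (x - 1) ^ N ∣ ∑ i ∈ s, c i * (x ^ a i - x ^ b i) := by
  convert sub_one_pow_dvd_aeval_of_dvd_taylor_coeff hq
    (∑ i ∈ s, C (c i) * (X ^ a i - X ^ b i)) fun j hj => ?_ using 1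
  · simp only [map_sum, map_mul, map_sub, map_pow, aeval_X, eq_intCast, map_intCast]
  · simpa only [map_sum, taylor_mul, map_sub, taylor_C, taylor_X_pow, finsetSum_coeff, coeff_C_mul,
      coeff_sub, map_one, coeff_X_add_one_pow] using hcoeff j hj

theorem IsPrimitiveRoot.sub_one_pow_dvd_prime {R : Type*} [CommRing R] [IsDomain R] {ζ : R}
    {p : ℕ} [Fact p.Prime] (hζ : IsPrimitiveRoot ζ p) : (ζ - 1) ^ (p - 1) ∣ (p : R) := by
  have hprod : ∏ μ ∈ primitiveRoots p R, (1 - μ) = p := by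
    simpa [cyclotomic_eq_prod_X_sub_primitiveRoots hζ, eval_prod] using
      eval_one_cyclotomic_prime (R := R) (p := p)
  rw [← hprod, ← Nat.totient_prime Fact.out, ← hζ.card_primitiveRoots, ← prod_const]
  refine prod_dvd_prod_of_dvd _ _ fun μ hμ => ?_
  obtain ⟨i, -, rfl⟩ := hζ.eq_pow_of_pow_eq_one
    ((mem_primitiveRoots (Nat.Prime.pos Fact.out)).1 hμ).pow_eq_one
  rw [← neg_sub (ζ ^ i) 1]
  exact (sub_one_dvd_pow_sub_one ζ i).neg_right

theorem IsPrimitiveRoot.zpow_eq_pow_val {K : Type*} [Field K] {ζ : K} {k : ℕ} [NeZero k]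
    (hζ : IsPrimitiveRoot ζ k) (t : ℤ) : ζ ^ t = ζ ^ (t : ZMod k).val := by
  rw [← zpow_natCast, ZMod.val_intCast]
  calc ζ ^ t = ζ ^ (t % k + k * (t / k)) := by rw [Int.emod_add_mul_ediv]
    _ = ζ ^ (t % k) := by
      rw [zpow_add₀ (hζ.ne_zero (NeZero.ne k)), zpow_mul, hζ.zpow_eq_one, one_zpow, mul_one]

theorem FiniteField.sum_eval_eq_zero_of_natDegree_lt {K : Type*} [Field K] [Fintype K]
    (P : K[X]) (hP : P.natDegree < Fintype.card K - 1) : ∑ x, P.eval x = 0 := by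
  simp_rw [eval_eq_sum_range]
  rw [sum_comm]
  refine sum_eq_zero fun i hi => ?_
  rw [mem_range] at hi
  rw [← mul_sum, FiniteField.sum_pow_lt_card_sub_one _ _ (by omega), mul_zero]

theorem ZMod.sum_eq_sum_range {A : Type*} [AddCommMonoid A] (p : ℕ) [NeZero p]
    (f : ZMod p → A) : ∑ x, f x = ∑ k ∈ range p, f k :=
  sum_nbij' ZMod.val Nat.cast (fun x _ => mem_range.2 x.val_lt) (fun _ _ => mem_univ _)
    (fun x _ => ZMod.natCast_zmod_val x) (fun k hk => ZMod.val_cast_of_lt (mem_range.1 hk))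
    fun x _ => by rw [ZMod.natCast_zmod_val]

theorem ZMod.sum_eq_add_two_nsmul_sum_Icc_of_even {A : Type*} [AddCommMonoid A] {p M : ℕ}
    [NeZero p] (hM : p = 2 * M + 1) (f : ZMod p → A) (hf : ∀ x, f (-x) = f x) :
    ∑ x, f x = f 0 + 2 • ∑ k ∈ Icc 1 M, f k := by
  have hrefl : ∀ k ∈ range M, f ((M + 1 + k : ℕ)) = f ((M - 1 - k + 1 : ℕ)) := by
    intro k hk
    rw [← hf]; congr 1
    rw [neg_eq_iff_add_eq_zero, ← Nat.cast_add, ZMod.natCast_eq_zero_iff]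
    have := mem_range.1 hk
    exact ⟨1, by omega⟩
  have hIcc : ∑ k ∈ Icc 1 M, f k = ∑ k ∈ range M, f (k + 1 : ℕ) := by
    rw [← Ico_add_one_right_eq_Icc, sum_Ico_eq_sum_range]
    simp [add_comm]
  rw [ZMod.sum_eq_sum_range, show range p = range (M + 1 + M) by rw [hM]; ring_nf, sum_range_add,
    sum_range_succ', sum_congr rfl hrefl, sum_range_reflect (fun k => f (k + 1 : ℕ)) M, hIcc,
    Nat.cast_zero, two_nsmul]
  abel

theorem ZMod.sum_Icc_eval_eq_zero_of_even {p M : ℕ} [Fact p.Prime] (hM : p = 2 * M + 1)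
    (P : (ZMod p)[X]) (hdeg : P.natDegree < p - 1) (heven : ∀ x, P.eval (-x) = P.eval x)
    (hzero : P.eval 0 = 0) : ∑ k ∈ Icc 1 M, P.eval (k : ZMod p) = 0 := by
  have htwo : (2 : ZMod p) ≠ 0 := by
    have := (Fact.out : p.Prime).two_le
    rw [← Nat.cast_two, Ne, ZMod.natCast_eq_zero_iff]
    exact fun h => absurd (Nat.le_of_dvd two_pos h) (by omega)
  have hsum := FiniteField.sum_eval_eq_zero_of_natDegree_lt P (by rwa [ZMod.card])
  rw [ZMod.sum_eq_add_two_nsmul_sum_Icc_of_even hM _ heven, hzero, zero_add, nsmul_eq_mul,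
    Nat.cast_two] at hsum
  exact (mul_eq_zero.1 hsum).resolve_left htwo

theorem descPochhammer_eval_neg_add {R : Type*} [CommRing R] (r : ℕ) (x : R) :
    (descPochhammer R (2 * r + 1)).eval (-x + r) =
      -(descPochhammer R (2 * r + 1)).eval (x + r) := by
  rw [descPochhammer_eval_eq_ascPochhammer,
    show -x + r - ((2 * r + 1 : ℕ) : R) + 1 = -(x + r) by push_cast; ring,
    ascPochhammer_eval_neg_eq_descPochhammer, (odd_two_mul_add_one r).neg_one_pow, neg_one_mul]

theorem ZMod.natCast_choose_val_mul_factorial {n : ℕ} [NeZero n] (x : ZMod n) (j : ℕ) :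
    (x.val.choose j : ZMod n) * j ! = (descPochhammer (ZMod n) j).eval x := by
  rw [← Nat.cast_mul, mul_comm, ← Nat.descFactorial_eq_factorial_mul_choose,
    ← descPochhammer_eval_eq_descFactorial, ZMod.natCast_zmod_val]

-- The polynomial `h` of the proof sketch, with `n = r + 1`.
noncomputable def linWangPoly (R : Type*) [CommRing R] (g m : R) (j r : ℕ) : R[X] :=
  ((descPochhammer R j).comp (C g * X ^ 2 - C m * X) -
      (descPochhammer R j).comp (C g * X ^ 2 + C m * X)) *
    (descPochhammer R (2 * r + 1)).comp (X + C (r : R))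

section linWangPoly

variable {R : Type*} [CommRing R] (g m : R) (j r : ℕ)

theorem linWangPoly_eval (x : R) : (linWangPoly R g m j r).eval x =
    ((descPochhammer R j).eval (g * x ^ 2 - m * x) -
        (descPochhammer R j).eval (g * x ^ 2 + m * x)) *
      (descPochhammer R (2 * r + 1)).eval (x + r) := by
  simp [linWangPoly, eval_comp]

theorem linWangPoly_eval_neg (x : R) :
    (linWangPoly R g m j r).eval (-x) = (linWangPoly R g m j r).eval x := by
  rw [linWangPoly_eval, linWangPoly_eval, descPochhammer_eval_neg_add]
  ring_nf

theorem natDegree_linWangPoly_le [NoZeroDivisors R] [Nontrivial R] :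
    (linWangPoly R g m j r).natDegree ≤ 2 * j + (2 * r + 1) := by
  have hquad : ∀ b : R, (C g * X ^ 2 + C b * X).natDegree ≤ 2 := fun b => by compute_degree
  have hcomp : ∀ b : R, ((descPochhammer R j).comp (C g * X ^ 2 + C b * X)).natDegree ≤ 2 * j :=
    fun b => natDegree_comp_le.trans <| by
      rw [descPochhammer_natDegree, mul_comm]; gcongr; exact hquad b
  unfold linWangPoly
  refine natDegree_mul_le.trans (add_le_add ?_ ?_)
  · rw [show C g * X ^ 2 - C m * X = C g * X ^ 2 + C (-m) * X by
      rw [C_neg, neg_mul, ← sub_eq_add_neg]]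
    exact (natDegree_sub_le _ _).trans (max_le (hcomp _) (hcomp _))
  · refine natDegree_comp_le.trans ?_
    rw [descPochhammer_natDegree, natDegree_X_add_C, mul_one]

end linWangPoly

theorem linWangPoly_eval_natCast {p : ℕ} [NeZero p] (g m : ZMod p) (j r k : ℕ) :
    (linWangPoly (ZMod p) g m j r).eval (k : ZMod p) =
      (((g * k ^ 2 - m * k).val.choose j : ZMod p) - (g * k ^ 2 + m * k).val.choose j) *
        (k + r).choose (2 * r + 1) * (j ! * (2 * r + 1)!) := by
  rw [linWangPoly_eval, ← ZMod.natCast_choose_val_mul_factorial,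
    ← ZMod.natCast_choose_val_mul_factorial, ← Nat.cast_add, descPochhammer_eval_eq_descFactorial,
    Nat.descFactorial_eq_factorial_mul_choose]
  push_cast
  ring

theorem sum_choose_mul_choose_val_sub_choose_val_eq_zero {p M : ℕ} [Fact p.Prime]
    (hM : p = 2 * M + 1) (g m : ZMod p) {n j : ℕ} (hn : 1 ≤ n) (hj : j + n ≤ M) :
    ∑ k ∈ Icc n M, ((k + n - 1).choose (k - n) : ZMod p) *
      (((g * k ^ 2 - m * k).val.choose j : ZMod p) - (g * k ^ 2 + m * k).val.choose j) = 0 := by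
  obtain ⟨r, rfl⟩ : ∃ r, n = r + 1 := ⟨n - 1, by omega⟩
  have hp := (Fact.out : p.Prime)
  have hfact : ((j ! * (2 * r + 1)! : ℕ) : ZMod p) ≠ 0 := by
    rw [Ne, ZMod.natCast_eq_zero_iff, hp.dvd_mul, hp.dvd_factorial, hp.dvd_factorial]
    omega
  have hsum := ZMod.sum_Icc_eval_eq_zero_of_even hM (linWangPoly (ZMod p) g m j r)
    ((natDegree_linWangPoly_le g m j r).trans_lt (by omega)) (linWangPoly_eval_neg g m j r)
    (by simpa using linWangPoly_eval_natCast g m j r 0)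
  simp_rw [linWangPoly_eval_natCast, ← sum_mul] at hsum
  push_cast at hfact
  rw [← sum_subset (Icc_subset_Icc_left (by omega : 1 ≤ r + 1)) ?_] at hsum
  · rw [← (mul_eq_zero.1 hsum).resolve_right hfact]
    refine sum_congr rfl fun k hk => ?_
    rw [mem_Icc] at hk
    rw [mul_comm, show k + (r + 1) - 1 = k + r by omega,
      Nat.choose_symm_of_eq_add (n := k + r) (b := 2 * r + 1) (by omega)]
  · intro k hk hk'
    simp only [mem_Icc] at hk hk'
    rw [Nat.choose_eq_zero_of_lt (n := k + r) (by omega), Nat.cast_zero, mul_zero]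

theorem lin_wang_divisibility_general (p : ℕ) (hp : p.Prime) (hodd : Odd p)
    (ξ : ℂ) (hξ : ξ = Complex.exp (2 * Real.pi * Complex.I / p))
    (m : ℤ) (g : ℤ)
    (n : ℕ) (hn1 : 1 ≤ n) (hn2 : n ≤ (p - 1) / 2) :
    ∃ c ∈ Subring.closure {ξ},
      (∑ k ∈ Finset.Icc n ((p - 1) / 2),
        (ξ ^ (-(m * k)) - ξ ^ (m * k)) * ξ ^ (g * (k : ℤ) ^ 2) *
          (Nat.choose (k + n - 1) (k - n) : ℂ))
        = (ξ - 1) ^ ((p - 1) / 2 - n + 1) * c := by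
  have : Fact p.Prime := ⟨hp⟩
  have hM : p = 2 * ((p - 1) / 2) + 1 := by obtain ⟨t, rfl⟩ := hodd; omega
  have hξp : IsPrimitiveRoot ξ p := hξ ▸ Complex.isPrimitiveRoot_exp p hp.ne_zero
  have hterm : ∀ k : ℕ, (ξ ^ (-(m * k)) - ξ ^ (m * k)) * ξ ^ (g * (k : ℤ) ^ 2) =
      ξ ^ ((g : ZMod p) * k ^ 2 - m * k).val - ξ ^ ((g : ZMod p) * k ^ 2 + m * k).val := by
    intro k
    rw [sub_mul, ← zpow_add₀ (hξp.ne_zero hp.ne_zero), ← zpow_add₀ (hξp.ne_zero hp.ne_zero),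
      hξp.zpow_eq_pow_val, hξp.zpow_eq_pow_val]
    congr 3 <;> push_cast <;> ring
  let x : Subring.closure {ξ} := ⟨ξ, Subring.subset_closure rfl⟩
  have hx : IsPrimitiveRoot x p := IsPrimitiveRoot.coe_submonoidClass_iff.1 hξp
  have hp_dvd : (x - 1) ^ ((p - 1) / 2 - n + 1) ∣ (p : Subring.closure {ξ}) :=
    (pow_dvd_pow _ (by omega)).trans hx.sub_one_pow_dvd_prime
  obtain ⟨c, hc⟩ := sub_one_pow_dvd_sum_mul_pow_sub_pow (q := p) hp_dvd (Icc n ((p - 1) / 2))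
    (fun k => ((k + n - 1).choose (k - n) : ℤ)) (fun k => ((g : ZMod p) * k ^ 2 - m * k).val)
    (fun k => ((g : ZMod p) * k ^ 2 + m * k).val) fun j hj => by
      rw [← ZMod.intCast_zmod_eq_zero_iff_dvd]
      push_cast
      exact sum_choose_mul_choose_val_sub_choose_val_eq_zero hM g m hn1 (by omega)
  refine ⟨c, c.2, ?_⟩
  simp_rw [hterm, mul_comm _ ((Nat.choose _ _ : ℕ) : ℂ)]
  have := congrArg Subtype.val hc
  push_cast at this
  exact this

/-- The key divisibility (Lin–Wang type lemma): for `m` coprime to `p`, any `g`, and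
`1 ≤ n ≤ (p-1)/2`, the sum `Σ_{k=n}^{(p-1)/2} (ξ^{-mk} - ξ^{mk}) ξ^{gk²} C(k+n-1,k-n)`
is divisible by `(ξ-1)^{(p-1)/2-n+1}` in `ℤ[ξ]`. -/
theorem lin_wang_divisibility (p : ℕ) (hp : p.Prime) (hodd : Odd p)
    (ξ : ℂ) (hξ : ξ = Complex.exp (2 * Real.pi * Complex.I / p))
    (m : ℤ) (hm : Int.gcd m p = 1) (g : ℤ)
    (n : ℕ) (hn1 : 1 ≤ n) (hn2 : n ≤ (p - 1) / 2) :
    ∃ c ∈ Subring.closure {ξ},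
      (∑ k ∈ Finset.Icc n ((p - 1) / 2),
        (ξ ^ (-(m * k)) - ξ ^ (m * k)) * ξ ^ (g * (k : ℤ) ^ 2) *
          (Nat.choose (k + n - 1) (k - n) : ℂ))
        = (ξ - 1) ^ ((p - 1) / 2 - n + 1) * c :=
  lin_wang_divisibility_general p hp hodd ξ hξ m g n hn1 hn2
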